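/- arXiv:1311.3750 — 2 statements merged into one kernel-verified Lean document; each statement's English description precedes it below -/
import Mathlib

section
/- There is an absolute constant C > 0 such that for all n ∈ ℕ, 0 < δ < 1, ρ = e^{-√δ/n}, and all real x with nx/(2π) within distance δ/2 of an integer (i.e., x ∈ U(n,δ)), the finite Blaschke product b(n,δ,e^{ix}) = (e^{inx} - ρ^n)/(ρ^n e^{inx} - 1) satisfies |b(n,δ,e^{ix}) + 1| ≤ C√δ. -/
open Real Complex

/-- The set `U(n,δ)` from the paper, viewed as a `2π`-periodic subset of `ℝ`. -/
def UU (n : ℕ) (δ : ℝ) : Set ℝ :=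
  {x : ℝ | ∃ j : ℤ, x ∈ Set.Ioo (π * (2 * j - δ) / n) (π * (2 * j + δ) / n)}

/-!
Write `w = e^{inx}` and `r = ρⁿ = e^{-√δ}`. Then `b + 1 = (1 + r)(w - 1)/(r w - 1)`. On `U(n,δ)`
the point `w` lies within arc length `πδ` of `1`, so `‖w - 1‖ ≤ πδ`, while `‖r w - 1‖ ≥ 1 - r`
and `1 - e^{-√δ} ≥ √δ/2`. Hence `‖b + 1‖ ≤ 2πδ/(√δ/2) = 4π√δ`.
-/

lemma blaschke_add_one {r w : ℂ} (h : r * w - 1 ≠ 0) :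
    (w - r) / (r * w - 1) + 1 = (1 + r) * (w - 1) / (r * w - 1) := by
  rw [div_add_one h]
  ring_nf

lemma norm_blaschke_add_one_le {r : ℝ} (hr0 : 0 ≤ r) (hr1 : r < 1) {w : ℂ} (hw : ‖w‖ ≤ 1) :
    ‖(w - r) / (r * w - 1) + 1‖ ≤ 2 * ‖w - 1‖ / (1 - r) := by
  have hden : 1 - r ≤ ‖(r : ℂ) * w - 1‖ := by
    calc 1 - r ≤ 1 - ‖(r : ℂ) * w‖ := by
          rw [norm_mul, Complex.norm_of_nonneg hr0]
          nlinarith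
      _ ≤ ‖(r : ℂ) * w - 1‖ := by
          simpa [norm_sub_rev] using norm_sub_norm_le (1 : ℂ) ((r : ℂ) * w)
  have hden_pos : 0 < ‖(r : ℂ) * w - 1‖ := by linarith
  rw [blaschke_add_one (norm_pos_iff.mp hden_pos), norm_div, norm_mul]
  have hnum : ‖(1 : ℂ) + r‖ ≤ 2 := by
    rw [← Complex.ofReal_one, ← Complex.ofReal_add, Complex.norm_of_nonneg (by linarith)]
    linarith
  gcongr

lemma half_le_one_sub_exp_neg {t : ℝ} (ht0 : 0 ≤ t) (ht1 : t ≤ 1) :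
    t / 2 ≤ 1 - Real.exp (-t) := by
  have h : (1 + t) * Real.exp (-t) ≤ 1 := by
    calc (1 + t) * Real.exp (-t) ≤ Real.exp t * Real.exp (-t) := by
          gcongr
          linarith [Real.add_one_le_exp t]
      _ = 1 := by rw [← Real.exp_add, add_neg_cancel, Real.exp_zero]
  nlinarith [Real.exp_pos (-t)]

lemma norm_exp_mul_I_sub_one_le_of_mem_UU {n : ℕ} (hn : 0 < n) {δ x : ℝ} (hx : x ∈ UU n δ) :
    ‖Complex.exp (n * x * I) - 1‖ ≤ π * δ := by
  obtain ⟨j, hx₁, hx₂⟩ := hx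
  have hn' : (0 : ℝ) < n := by exact_mod_cast hn
  rw [div_lt_iff₀ hn'] at hx₁
  rw [lt_div_iff₀ hn'] at hx₂
  set θ : ℝ := n * x - 2 * π * j
  have hperiod : Complex.exp (n * x * I) = Complex.exp (I * θ) := by
    rw [show (n * x * I : ℂ) = I * θ + j * (2 * π * I) by push_cast [θ]; ring,
      Complex.exp_add, Complex.exp_int_mul_two_pi_mul_I, mul_one]
  rw [hperiod]
  refine Real.norm_exp_I_mul_ofReal_sub_one_le.trans ?_
  rw [Real.norm_eq_abs, abs_le]
  constructor <;> linarith

lemma exp_div_natCast_pow {a : ℝ} {n : ℕ} (hn : 0 < n) : Real.exp (a / n) ^ n = Real.exp a := by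
  rw [← Real.exp_nat_mul, mul_div_cancel₀ _ (by positivity)]

theorem littlewood_stmt2 :
    ∃ C > (0 : ℝ), ∀ n : ℕ, 0 < n → ∀ δ : ℝ, 0 < δ → δ < 1 →
      ∀ x ∈ UU n δ,
        ‖(Complex.exp (n * x * Complex.I) - ((Real.exp (-Real.sqrt δ / n) : ℝ) : ℂ) ^ n) /
            (((Real.exp (-Real.sqrt δ / n) : ℝ) : ℂ) ^ n * Complex.exp (n * x * Complex.I) - 1)
          + 1‖ ≤ C * Real.sqrt δ := by
  refine ⟨4 * π, by positivity, fun n hn δ hδ0 hδ1 x hx => ?_⟩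
  set t := Real.sqrt δ
  have ht0 : 0 < t := Real.sqrt_pos.mpr hδ0
  have ht1 : t ≤ 1 := Real.sqrt_le_one.mpr hδ1.le
  have hδ : δ = t * t := (Real.mul_self_sqrt hδ0.le).symm
  have hgap := half_le_one_sub_exp_neg ht0.le ht1
  rw [← Complex.ofReal_pow, exp_div_natCast_pow hn]
  calc _ ≤ 2 * ‖Complex.exp (n * x * I) - 1‖ / (1 - Real.exp (-t)) :=
        norm_blaschke_add_one_le (Real.exp_pos _).le (Real.exp_lt_one_iff.mpr (by linarith))
          (by simp [Complex.norm_exp])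
    _ ≤ 2 * (π * δ) / (t / 2) := by
        gcongr
        exact norm_exp_mul_I_sub_one_le_of_mem_UU hn hx
    _ = 4 * π * t := by field_simp; rw [hδ]; ring
end

section
/- There is an absolute constant C > 0 such that for all n ∈ ℕ, 0 < δ < 1 sufficiently small, ρ = e^{-√δ/n}, and all real x not in U(n, δ^{1/4}), the finite Blaschke product b(n,δ,e^{ix}) = (e^{inx} - ρ^n)/(ρ^n e^{inx} - 1) satisfies |b(n,δ,e^{ix}) - 1| ≤ C δ^{1/4}. -/
/-!
With `R = ρ ^ n = exp (-√δ)`, `ε = δ ^ (1/4)` and `z = exp (i n x)` one has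
`b - 1 = (1 - R) (z + 1) / (R z - 1)`. The numerator is at most `2 (1 - R) ≤ 2 √δ = 2 ε²`.
For the denominator, `‖R z - 1‖² = (1 - R)² + R ‖z - 1‖²`; since `x ∉ U(n, ε)`, the angle `n x`
lies at distance at least `π ε` from `2πℤ`, so comparing chord and arc gives `‖z - 1‖ ≥ 2 ε`,
hence `‖R z - 1‖ ≥ ε` and `‖b - 1‖ ≤ 2 ε`.
-/

open Real Complex

lemma mem_UU_of_abs_sub_lt {n : ℕ} (hn : 0 < n) {ε x : ℝ} (j : ℤ)
    (h : |n * x - 2 * π * j| < π * ε) : x ∈ UU n ε := by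
  have hn' : (0 : ℝ) < n := by exact_mod_cast hn
  obtain ⟨h₁, h₂⟩ := abs_lt.1 h
  refine ⟨j, ?_, ?_⟩
  · rw [div_lt_iff₀ hn']; linarith
  · rw [lt_div_iff₀ hn']; linarith

lemma pi_mul_le_abs_toIocMod_of_notMem_UU {n : ℕ} (hn : 0 < n) {ε x : ℝ} (hx : x ∉ UU n ε) :
    π * ε ≤ |toIocMod two_pi_pos (-π) (n * x)| := by
  by_contra! h
  refine hx (mem_UU_of_abs_sub_lt hn (toIocDiv two_pi_pos (-π) (n * x)) ?_)
  rwa [← self_sub_toIocDiv_zsmul, zsmul_eq_mul, mul_comm _ (2 * π)] at h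

lemma two_mul_le_norm_exp_sub_one_of_notMem_UU {n : ℕ} (hn : 0 < n) {ε x : ℝ}
    (hx : x ∉ UU n ε) : 2 * ε ≤ ‖exp (n * x * I) - 1‖ := by
  have hz : exp (n * x * I) = exp ((n * x : ℝ) * I) := by push_cast; ring_nf
  have hangle := mul_angle_le_norm_sub (norm_exp_ofReal_mul_I (n * x)) norm_one
  rw [angle_exp_one] at hangle
  calc 2 * ε = 2 / π * (π * ε) := by field_simp
    _ ≤ 2 / π * |toIocMod two_pi_pos (-π) (n * x)| := by
      gcongr; exact pi_mul_le_abs_toIocMod_of_notMem_UU hn hx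
    _ ≤ ‖exp (n * x * I) - 1‖ := hz ▸ hangle

lemma norm_ofReal_mul_sub_one_sq {z : ℂ} (hz : ‖z‖ = 1) (R : ℝ) :
    ‖(R : ℂ) * z - 1‖ ^ 2 = (1 - R) ^ 2 + R * ‖z - 1‖ ^ 2 := by
  have hz' : z.re * z.re + z.im * z.im = 1 := by
    rw [← Complex.normSq_apply, ← Complex.sq_norm, hz, one_pow]
  simp only [Complex.sq_norm, Complex.normSq_apply, mul_re, mul_im, ofReal_re, ofReal_im,
    sub_re, sub_im, one_re, one_im]
  linear_combination (R ^ 2 - R) * hz'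

lemma div_sub_one_eq_of_mul_sub_one_ne_zero {K : Type*} [Field K] {z R : K} (h : R * z - 1 ≠ 0) :
    (z - R) / (R * z - 1) - 1 = (1 - R) * (z + 1) / (R * z - 1) := by
  rw [div_sub_one h]; ring

lemma norm_blaschke_sub_one_le {z : ℂ} (hz : ‖z‖ = 1) {R ε : ℝ} (hε : 0 < ε) (hR : 1 / 4 ≤ R)
    (hR₁ : |1 - R| ≤ ε ^ 2) (hz₁ : 2 * ε ≤ ‖z - 1‖) :
    ‖(z - R) / (R * z - 1) - 1‖ ≤ 2 * ε := by
  have hden : ε ≤ ‖(R : ℂ) * z - 1‖ := by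
    refine abs_le_of_sq_le_sq' ?_ (norm_nonneg _) |>.2
    rw [norm_ofReal_mul_sub_one_sq hz]
    calc ε ^ 2 = 1 / 4 * (2 * ε) ^ 2 := by ring
      _ ≤ R * ‖z - 1‖ ^ 2 := by gcongr
      _ ≤ (1 - R) ^ 2 + R * ‖z - 1‖ ^ 2 := le_add_of_nonneg_left (sq_nonneg _)
  have hden₀ : 0 < ‖(R : ℂ) * z - 1‖ := hε.trans_le hden
  have hz₂ : ‖z + 1‖ ≤ 2 := (norm_add_le _ _).trans (by simp [hz]; norm_num)
  rw [div_sub_one_eq_of_mul_sub_one_ne_zero (norm_pos_iff.1 hden₀), norm_div, norm_mul,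
    div_le_iff₀ hden₀, ← ofReal_one, ← ofReal_sub, norm_real, Real.norm_eq_abs]
  calc |1 - R| * ‖z + 1‖ ≤ ε ^ 2 * 2 := by gcongr
    _ = 2 * ε * ε := by ring
    _ ≤ 2 * ε * ‖(R : ℂ) * z - 1‖ := by gcongr

lemma rpow_one_div_four_sq {δ : ℝ} (hδ : 0 ≤ δ) : (δ ^ ((1 : ℝ) / 4)) ^ 2 = √δ := by
  rw [Real.sqrt_eq_rpow, ← Real.rpow_natCast, ← Real.rpow_mul hδ]
  norm_num

lemma one_div_four_le_exp_neg {t : ℝ} (ht : t ≤ 1) : 1 / 4 ≤ Real.exp (-t) := by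
  calc (1 : ℝ) / 4 ≤ (Real.exp 1)⁻¹ := by
        rw [one_div, inv_le_inv₀ (by norm_num) (Real.exp_pos 1)]
        linarith [Real.exp_one_lt_d9]
    _ = Real.exp (-1) := (Real.exp_neg 1).symm
    _ ≤ Real.exp (-t) := Real.exp_le_exp.2 (neg_le_neg ht)

lemma abs_one_sub_exp_neg_le {t : ℝ} (ht : 0 ≤ t) : |1 - Real.exp (-t)| ≤ t := by
  rw [abs_of_nonneg (sub_nonneg.2 (Real.exp_le_one_iff.2 (neg_nonpos.2 ht)))]
  linarith [Real.one_sub_le_exp_neg t]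

theorem littlewood_stmt3 :
    ∃ C > (0 : ℝ), ∃ δ₀ > (0 : ℝ), ∀ n : ℕ, 0 < n → ∀ δ : ℝ, 0 < δ → δ < δ₀ →
      ∀ x : ℝ, x ∉ UU n (δ ^ ((1 : ℝ) / 4)) →
        ‖(Complex.exp (n * x * Complex.I) - ((Real.exp (-Real.sqrt δ / n) : ℝ) : ℂ) ^ n) /
            (((Real.exp (-Real.sqrt δ / n) : ℝ) : ℂ) ^ n * Complex.exp (n * x * Complex.I) - 1)
          - 1‖ ≤ C * δ ^ ((1 : ℝ) / 4) := by
  refine ⟨2, two_pos, 1, one_pos, fun n hn δ hδ hδ₁ x hx => ?_⟩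
  have hρ : ((Real.exp (-√δ / n) : ℝ) : ℂ) ^ n = ((Real.exp (-√δ) : ℝ) : ℂ) := by
    rw [← ofReal_pow, ← Real.exp_nat_mul, mul_div_cancel₀ _ (by positivity)]
  have hz : ‖exp (n * x * I)‖ = 1 := by
    rw [← ofReal_natCast, ← ofReal_mul]; exact norm_exp_ofReal_mul_I _
  have ht₁ : √δ ≤ 1 := Real.sqrt_le_one.2 hδ₁.le
  rw [hρ]
  refine norm_blaschke_sub_one_le hz (Real.rpow_pos_of_pos hδ _) (one_div_four_le_exp_neg ht₁)
    ?_ (two_mul_le_norm_exp_sub_one_of_notMem_UU hn hx)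
  rw [rpow_one_div_four_sq hδ.le]
  exact abs_one_sub_exp_neg_le (Real.sqrt_nonneg δ)
end
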